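/- Let G be the Cayley graph of a finitely generated group with respect to a finite symmetric generating set, and suppose its growth function is superpolynomial, i.e., v(n) ⪰ n^d for every integer d ≥ 2 (in particular this holds for any group of intermediate growth). Then G does not satisfy polynomial containment of any degree: for every k ∈ ℕ and every function f : ℕ → ℕ with f(n) = O(n^k), G does not satisfy the {f(n)}-containment property. -/

import Mathlib

/-!
Double counting the pairs `(x, g)` with `x ∈ K`, `g` in the word ball of radius `n` and `x g ∉ K`
gives `|K| ≤ 2n |∂K|` as soon as that ball has at least `2|K|` elements. Superpolynomial growth
lets `n` be of order `|K|^(1/(k+3))`, so every finite nonempty `K` satisfies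
`|K|^(k+2) ≤ C |∂K|^(k+3)`. Start the fire on `M^(k+2)` vertices, `M` large. If at time `j` the
fire has at least `(j+M)^(k+2)` vertices, this inequality makes its boundary larger than the
`O((j+1)^(k+1))` vertices protected so far by more than `(j+M+1)^(k+2) - (j+M)^(k+2)`; so by
induction the fire strictly grows at every step and is never contained.
-/

open Filter Real

/-- The outer vertex boundary of a set of vertices: vertices outside `K`
adjacent to some vertex of `K`. -/
def SimpleGraph.outerBoundary {V : Type*} (G : SimpleGraph V) (K : Set V) : Set V :=
  {v | v ∉ K ∧ ∃ u ∈ K, G.Adj u v}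

/-- The (vertex) isoperimetric profile of a graph:
`Φ(k) = inf {|∂K| : K ⊆ V, |K| = k}`. -/
noncomputable def SimpleGraph.isoProfile {V : Type*} (G : SimpleGraph V) (k : ℕ) : ℕ :=
  sInf {m | ∃ K : Set V, K.Finite ∧ K.ncard = k ∧ (G.outerBoundary K).ncard = m}

/-- A valid play of the firefighter game on `G` against at most `f n` firefighters
deployed at step `n`. `K n` is the set of burning vertices at time `n`, and `P n`
is the cumulative set of protected vertices at time `n`: at each step at most
`f (n+1)` new vertices, none of them on fire, become protected, and then the fire
spreads to all unprotected neighbours of burning vertices. -/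
structure FireStrategy {V : Type*} (G : SimpleGraph V) (f : ℕ → ℕ) (K P : ℕ → Set V) : Prop where
  burning_finite : ∀ n, (K n).Finite
  protected_finite : ∀ n, (P n).Finite
  protected_zero : P 0 = ∅
  protected_mono : ∀ n, P n ⊆ P (n + 1)
  protected_card : ∀ n, (P (n + 1) \ P n).ncard ≤ f (n + 1)
  protected_not_burning : ∀ n, Disjoint (P (n + 1)) (K n)
  spread : ∀ n, K (n + 1) = K n ∪ (G.outerBoundary (K n) \ P (n + 1))

/-- `G` has the `{f(n)}`-containment property if every finite initial fire admits a
strategy protecting at most `f n` vertices at step `n` under which the set of burning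
vertices is eventually constant. -/
def HasContainment {V : Type*} (G : SimpleGraph V) (f : ℕ → ℕ) : Prop :=
  ∀ K₀ : Set V, K₀.Finite →
    ∃ K P : ℕ → Set V, K 0 = K₀ ∧ FireStrategy G f K P ∧ ∃ N, ∀ n, N ≤ n → K n = K N

/-- The Cayley graph of a group w.r.t. a finite (symmetric) set `S`. -/
def cayleyGraph {Γ : Type*} [Group Γ] (S : Finset Γ) : SimpleGraph Γ :=
  SimpleGraph.fromRel (fun g h => g⁻¹ * h ∈ S)

/-- The growth function of a group w.r.t. a finite generating set: the number of
elements expressible as a product of at most `n` generators, i.e. `|B_n(id)|` in the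
word metric. -/
noncomputable def growth {Γ : Type*} [Group Γ] (S : Finset Γ) (n : ℕ) : ℕ :=
  Set.ncard {g : Γ | ∃ l : List Γ, l.length ≤ n ∧ (∀ x ∈ l, x ∈ (S : Set Γ)) ∧ l.prod = g}


lemma add_one_pow_succ_le (x : ℕ) :
    ∀ q : ℕ, (x + 1) ^ (q + 1) ≤ x ^ (q + 1) + (q + 1) * (x + 1) ^ q
  | 0 => by simp
  | q + 1 => by
    have ih := add_one_pow_succ_le x q
    have hmono : x ^ (q + 1) ≤ (x + 1) ^ (q + 1) := Nat.pow_le_pow_left x.le_succ _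
    calc (x + 1) ^ (q + 2) = (x + 1) * (x + 1) ^ (q + 1) := by ring
      _ ≤ (x + 1) * (x ^ (q + 1) + (q + 1) * (x + 1) ^ q) := by gcongr
      _ = x ^ (q + 2) + x ^ (q + 1) + (q + 1) * (x + 1) ^ (q + 1) := by ring
      _ ≤ x ^ (q + 2) + (q + 2) * (x + 1) ^ (q + 1) := by linarith

lemma exists_le_pow_le_two_pow_mul {e : ℕ} (he : e ≠ 0) :
    ∀ m : ℕ, 0 < m → ∃ n : ℕ, 1 ≤ n ∧ m ≤ n ^ e ∧ n ^ e ≤ 2 ^ e * m := by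
  intro m hm
  induction m, hm using Nat.le_induction with
  | base => exact ⟨1, le_rfl, by simp, by simp [Nat.one_le_two_pow]⟩
  | succ m hm ih =>
    obtain ⟨n, hn, hmn, hnm⟩ := ih
    rcases hmn.lt_or_eq with hlt | heq
    · exact ⟨n, hn, hlt, hnm.trans (by gcongr; omega)⟩
    · refine ⟨n + 1, by omega, ?_, ?_⟩
      · rw [heq]
        exact Nat.pow_lt_pow_left n.lt_succ_self he
      · calc (n + 1) ^ e ≤ (2 * n) ^ e := by gcongr; omega
          _ = 2 ^ e * m := by rw [mul_pow, heq]
          _ ≤ 2 ^ e * (m + 1) := by gcongr; omega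

lemma le_of_pow_le_mul_pow {q C Q x a b : ℕ} (hC : 0 < C) (hx : C * Q ^ (q + 2) ≤ x)
    (ha : x ^ (q + 1) ≤ a) (hiso : a ^ (q + 1) ≤ C * b ^ (q + 2)) : Q * x ^ q ≤ b := by
  have key : C * (Q * x ^ q) ^ (q + 2) ≤ C * b ^ (q + 2) :=
    calc C * (Q * x ^ q) ^ (q + 2) = C * Q ^ (q + 2) * x ^ (q * (q + 2)) := by ring
      _ ≤ x * x ^ (q * (q + 2)) := by gcongr
      _ = (x ^ (q + 1)) ^ (q + 1) := by ring
      _ ≤ a ^ (q + 1) := by gcongr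
      _ ≤ C * b ^ (q + 2) := hiso
  exact (Nat.pow_le_pow_iff_left (by omega)).1 (Nat.le_of_mul_le_mul_left key hC)

namespace FireStrategy

variable {V : Type*} {G : SimpleGraph V} {f : ℕ → ℕ} {K P : ℕ → Set V}

lemma ncard_protected_le (st : FireStrategy G f K P) (n : ℕ) :
    (P n).ncard ≤ ∑ i ∈ Finset.range n, f (i + 1) := by
  induction n with
  | zero => simp [st.protected_zero]
  | succ n ih =>
    rw [Finset.sum_range_succ, ← Set.union_sdiff_cancel (st.protected_mono n)]
    exact (Set.ncard_union_le _ _).trans (add_le_add ih (st.protected_card n))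

lemma ncard_protected_le_mul_pow (st : FireStrategy G f K P) {A k : ℕ}
    (hf : ∀ n, f (n + 1) ≤ A * (n + 1) ^ k) (n : ℕ) : (P n).ncard ≤ A * n ^ (k + 1) :=
  calc (P n).ncard ≤ ∑ i ∈ Finset.range n, f (i + 1) := st.ncard_protected_le n
    _ ≤ ∑ _i ∈ Finset.range n, A * n ^ k :=
        Finset.sum_le_sum fun i hi => (hf i).trans (by gcongr; simpa using hi)
    _ = A * n ^ (k + 1) := by
        rw [Finset.sum_const, Finset.card_range, smul_eq_mul]; ring

lemma ncard_add_ncard_outerBoundary_le (st : FireStrategy G f K P) (n : ℕ) :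
    (K n).ncard + (G.outerBoundary (K n)).ncard ≤ (K (n + 1)).ncard + (P (n + 1)).ncard := by
  have hsub : K n ∪ G.outerBoundary (K n) ⊆ K (n + 1) ∪ P (n + 1) := by
    rw [st.spread n]
    rintro v (hv | hv)
    · exact Or.inl (Or.inl hv)
    · by_cases hP : v ∈ P (n + 1)
      · exact Or.inr hP
      · exact Or.inl (Or.inr ⟨hv, hP⟩)
  have hfin : (K (n + 1) ∪ P (n + 1)).Finite :=
    (st.burning_finite _).union (st.protected_finite _)
  have hdisj : Disjoint (K n) (G.outerBoundary (K n)) :=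
    Set.disjoint_right.2 fun _ hv => hv.1
  rw [← Set.ncard_union_eq hdisj (st.burning_finite n) ((hfin.subset hsub).subset
    Set.subset_union_right)]
  exact (Set.ncard_le_ncard hsub hfin).trans (Set.ncard_union_le _ _)

lemma ncard_add_le_ncard_succ_of_isoperimetric (st : FireStrategy G f K P) {k A C D : ℕ}
    (hC : 0 < C) (hiso : ∀ K : Set V, K.Finite → K.Nonempty →
      K.ncard ^ (k + 2) ≤ C * (G.outerBoundary K).ncard ^ (k + 3))
    (hf : ∀ n, f (n + 1) ≤ A * (n + 1) ^ k) {j x : ℕ} (hjx : j + 1 ≤ x)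
    (hx : C * (A + D) ^ (k + 3) ≤ x) (hj : x ^ (k + 2) ≤ (K j).ncard) :
    (K j).ncard + D * x ^ (k + 1) ≤ (K (j + 1)).ncard := by
  have hne : (K j).Nonempty :=
    Set.nonempty_of_ncard_ne_zero ((pow_pos (by omega : 0 < x) _).trans_le hj).ne'
  have hbd : (A + D) * x ^ (k + 1) ≤ (G.outerBoundary (K j)).ncard :=
    le_of_pow_le_mul_pow hC hx hj (hiso _ (st.burning_finite j) hne)
  have hP : (P (j + 1)).ncard ≤ A * x ^ (k + 1) :=
    (st.ncard_protected_le_mul_pow hf _).trans (by gcongr)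
  have := st.ncard_add_ncard_outerBoundary_le j
  rw [add_mul] at hbd
  omega

end FireStrategy

lemma infinite_of_isoperimetric {V : Type*} {G : SimpleGraph V} [Nonempty V] {d C : ℕ}
    (hiso : ∀ K : Set V, K.Finite → K.Nonempty →
      K.ncard ^ d ≤ C * (G.outerBoundary K).ncard ^ (d + 1)) : Infinite V := by
  by_contra hfin
  rw [not_infinite_iff_finite] at hfin
  have hbd : G.outerBoundary Set.univ = ∅ := Set.eq_empty_of_forall_notMem fun _ hv => hv.1 trivial
  have := hiso Set.univ Set.finite_univ Set.univ_nonempty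
  rw [hbd, Set.ncard_empty, zero_pow d.succ_ne_zero, mul_zero] at this
  exact (pow_pos ((Set.ncard_pos Set.finite_univ).2 Set.univ_nonempty) d).not_ge this

theorem not_hasContainment_of_isoperimetric {V : Type*} {G : SimpleGraph V} [Nonempty V]
    {f : ℕ → ℕ} {k A C : ℕ} (hC : 0 < C)
    (hiso : ∀ K : Set V, K.Finite → K.Nonempty →
      K.ncard ^ (k + 2) ≤ C * (G.outerBoundary K).ncard ^ (k + 3))
    (hf : ∀ n, f (n + 1) ≤ A * (n + 1) ^ k) :
    ¬ HasContainment G f := by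
  intro hcont
  set D := (k + 2) * 2 ^ (k + 1)
  set M := C * (A + D) ^ (k + 3) + 1 with hM
  have : Infinite V := infinite_of_isoperimetric hiso
  obtain ⟨K₀, -, hK₀⟩ := (Set.infinite_univ (α := V)).exists_subset_card_eq (M ^ (k + 2))
  obtain ⟨K, P, hK0, st, N, hN⟩ := hcont K₀ K₀.finite_toSet
  have hstep : ∀ j, (j + M) ^ (k + 2) ≤ (K j).ncard →
      (K j).ncard + D * (j + M) ^ (k + 1) ≤ (K (j + 1)).ncard := fun j =>
    st.ncard_add_le_ncard_succ_of_isoperimetric hC hiso hf (by omega) (by omega)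
  have hgrow : ∀ j, (j + M) ^ (k + 2) ≤ (K j).ncard := by
    intro j
    induction j with
    | zero => simp [hK0, hK₀]
    | succ j ih =>
      have hbinom : (j + M + 1) ^ (k + 2) ≤ (j + M) ^ (k + 2) + D * (j + M) ^ (k + 1) :=
        calc (j + M + 1) ^ (k + 2) ≤ (j + M) ^ (k + 2) + (k + 2) * (j + M + 1) ^ (k + 1) :=
              add_one_pow_succ_le _ _
          _ ≤ (j + M) ^ (k + 2) + (k + 2) * (2 * (j + M)) ^ (k + 1) := by gcongr; omega
          _ = (j + M) ^ (k + 2) + D * (j + M) ^ (k + 1) := by rw [mul_pow]; ring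
      rw [show j + 1 + M = j + M + 1 by ring]
      linarith [hstep j ih]
  have hcontained := hstep N (hgrow N)
  rw [hN (N + 1) N.le_succ] at hcontained
  have : 0 < D * (N + M) ^ (k + 1) := by positivity
  omega

section Cayley

open scoped Pointwise

variable {Γ : Type*} [Group Γ] (S : Finset Γ)

def wordBall (n : ℕ) : Set Γ :=
  {g | ∃ l : List Γ, l.length ≤ n ∧ (∀ x ∈ l, x ∈ (S : Set Γ)) ∧ l.prod = g}

lemma wordBall_succ_subset (n : ℕ) :
    wordBall S (n + 1) ⊆ wordBall S n ∪ (S : Set Γ) * wordBall S n := by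
  rintro g ⟨l, hl, hS, rfl⟩
  cases l with
  | nil => exact Or.inl ⟨[], by simp, by simp, rfl⟩
  | cons s t =>
    refine Or.inr (Set.mul_mem_mul (hS s List.mem_cons_self) ⟨t, ?_, ?_, rfl⟩)
    · simpa using hl
    · exact fun x hx => hS x (List.mem_cons_of_mem s hx)

lemma wordBall_finite (n : ℕ) : (wordBall S n).Finite := by
  induction n with
  | zero =>
    refine (Set.finite_singleton 1).subset ?_
    rintro g ⟨l, hl, -, rfl⟩
    simp [List.length_eq_zero_iff.1 (Nat.le_zero.1 hl)]
  | succ n ih => exact (ih.union (S.finite_toSet.mul ih)).subset (wordBall_succ_subset S n)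

lemma mul_mem_outerBoundary {K : Set Γ} {x s : Γ} (hs : s ∈ S) (hx : x ∈ K) (hxs : x * s ∉ K) :
    x * s ∈ (cayleyGraph S).outerBoundary K :=
  ⟨hxs, x, hx, (SimpleGraph.fromRel_adj _ _ _).2 ⟨fun h => hxs (h ▸ hx), Or.inl (by simpa)⟩⟩

lemma outerBoundary_subset_mul (K : Set Γ) :
    (cayleyGraph S).outerBoundary K ⊆ K * ((S : Set Γ) ∪ (S : Set Γ)⁻¹) := by
  rintro v ⟨-, u, hu, hadj⟩
  refine ⟨u, hu, u⁻¹ * v, ?_, by group⟩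
  rcases ((SimpleGraph.fromRel_adj _ _ _).1 hadj).2 with h | h
  · exact Or.inl h
  · exact Or.inr (by simpa [Set.mem_inv] using h)

lemma outerBoundary_finite {K : Set Γ} (hK : K.Finite) :
    ((cayleyGraph S).outerBoundary K).Finite :=
  (hK.mul (S.finite_toSet.union S.finite_toSet.inv)).subset (outerBoundary_subset_mul S K)

/-- Each `x` is charged to the first point where the path `x, x s₁, x s₁ s₂, …` leaves `K`. -/
lemma ncard_sep_mul_prod_notMem_le {K : Set Γ} (hK : K.Finite) :
    ∀ l : List Γ, (∀ x ∈ l, x ∈ (S : Set Γ)) →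
      {x ∈ K | x * l.prod ∉ K}.ncard ≤ l.length * ((cayleyGraph S).outerBoundary K).ncard
  | [], _ => by simp
  | s :: t, hl => by
    have ih := ncard_sep_mul_prod_notMem_le hK t fun x hx => hl x (List.mem_cons_of_mem s hx)
    have hsub : {x ∈ K | x * (s :: t).prod ∉ K} ⊆
        (· * s⁻¹) '' ((cayleyGraph S).outerBoundary K ∪ {y ∈ K | y * t.prod ∉ K}) := by
      rintro x ⟨hx, hxl⟩
      refine ⟨x * s, ?_, by group⟩
      by_cases hxs : x * s ∈ K
      · exact Or.inr ⟨hxs, by rwa [List.prod_cons, ← mul_assoc] at hxl⟩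
      · exact Or.inl (mul_mem_outerBoundary S (hl s List.mem_cons_self) hx hxs)
    have hfin : ((cayleyGraph S).outerBoundary K ∪ {y ∈ K | y * t.prod ∉ K}).Finite :=
      (outerBoundary_finite S hK).union (hK.subset (Set.sep_subset _ _))
    calc {x ∈ K | x * (s :: t).prod ∉ K}.ncard
        ≤ ((cayleyGraph S).outerBoundary K ∪ {y ∈ K | y * t.prod ∉ K}).ncard :=
          (Set.ncard_le_ncard hsub (hfin.image _)).trans_eq
            (Set.ncard_image_of_injective _ (mul_left_injective s⁻¹))
      _ ≤ ((cayleyGraph S).outerBoundary K).ncard + {y ∈ K | y * t.prod ∉ K}.ncard :=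
          Set.ncard_union_le _ _
      _ ≤ (s :: t).length * ((cayleyGraph S).outerBoundary K).ncard := by
          rw [List.length_cons]; linarith

lemma ncard_le_two_mul_mul_ncard_outerBoundary {K : Set Γ} (hK : K.Finite) {n : ℕ}
    (hn : 2 * K.ncard ≤ growth S n) :
    K.ncard ≤ 2 * n * ((cayleyGraph S).outerBoundary K).ncard := by
  classical
  set b := ((cayleyGraph S).outerBoundary K).ncard
  set B := (wordBall_finite S n).toFinset
  have hB : B.card = growth S n := (Set.ncard_eq_toFinset_card _ _).symm
  have hK' : hK.toFinset.card = K.ncard := (Set.ncard_eq_toFinset_card _ _).symm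
  have hcount := Finset.card_mul_le_card_mul (fun x g => x * g ∉ K) (s := hK.toFinset) (t := B)
    (m := B.card - K.ncard) (n := n * b) ?_ ?_
  · rcases Nat.eq_zero_or_pos K.ncard with h0 | hpos
    · simp [h0]
    have : B.card * K.ncard ≤ B.card * (2 * n * b) :=
      calc B.card * K.ncard ≤ K.ncard * (2 * (B.card - K.ncard)) := by
            rw [mul_comm]; gcongr; omega
        _ = 2 * (K.ncard * (B.card - K.ncard)) := by ring
        _ ≤ 2 * (B.card * (n * b)) := by rw [hK'] at hcount; omega
        _ = B.card * (2 * n * b) := by ring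
    exact Nat.le_of_mul_le_mul_left this (by omega)
  · intro x _
    have hin : (B.filter fun g => x * g ∈ K).card ≤ K.ncard := by
      rw [← hK']
      refine Finset.card_le_card_of_injOn (x * ·) (fun g hg => ?_) (mul_right_injective x).injOn
      simpa using (Finset.mem_filter.1 hg).2
    have := Finset.card_filter_add_card_filter_not (s := B) (fun g => x * g ∈ K)
    simp only [Finset.bipartiteAbove]
    omega
  · intro g hg
    obtain ⟨l, hl, hS, rfl⟩ := (Set.Finite.mem_toFinset _).1 hg
    calc (hK.toFinset.bipartiteBelow (fun x g => x * g ∉ K) l.prod).card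
        = {x ∈ K | x * l.prod ∉ K}.ncard := by
          rw [← Set.ncard_coe_finset]; simp [Finset.bipartiteBelow]
      _ ≤ l.length * b := ncard_sep_mul_prod_notMem_le S hK l hS
      _ ≤ n * b := by gcongr

lemma exists_isoperimetric_of_growth {d C : ℕ} (hC : 0 < C)
    (hg : ∀ n : ℕ, 1 ≤ n → n ^ (d + 1) ≤ C * growth S (C * n)) :
    ∃ C' > 0, ∀ K : Set Γ, K.Finite → K.Nonempty →
      K.ncard ^ d ≤ C' * ((cayleyGraph S).outerBoundary K).ncard ^ (d + 1) := by
  refine ⟨(2 * C) ^ (d + 1) * 2 ^ (d + 2) * C, by positivity, fun K hK hne => ?_⟩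
  set m := K.ncard
  set b := ((cayleyGraph S).outerBoundary K).ncard
  have hm : 0 < m := (Set.ncard_pos hK).2 hne
  obtain ⟨n, hn, hlo, hhi⟩ :=
    exists_le_pow_le_two_pow_mul (e := d + 1) (by omega) (2 * C * m) (by positivity)
  have hball : 2 * m ≤ growth S (C * n) :=
    Nat.le_of_mul_le_mul_left (by linarith [hg n hn]) hC
  have hmb : m ≤ 2 * (C * n) * b := ncard_le_two_mul_mul_ncard_outerBoundary S hK hball
  refine Nat.le_of_mul_le_mul_right ?_ hm
  calc m ^ d * m = m ^ (d + 1) := (pow_succ _ _).symm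
    _ ≤ (2 * (C * n) * b) ^ (d + 1) := by gcongr
    _ = (2 * C * b) ^ (d + 1) * n ^ (d + 1) := by ring
    _ ≤ (2 * C * b) ^ (d + 1) * (2 ^ (d + 1) * (2 * C * m)) := by gcongr
    _ = (2 * C) ^ (d + 1) * 2 ^ (d + 2) * C * b ^ (d + 1) * m := by ring

end Cayley

lemma exists_succ_le_mul_pow_of_isBigO {f : ℕ → ℕ} {k : ℕ}
    (hf : (fun n => (f n : ℝ)) =O[atTop] (fun n => (n : ℝ) ^ k)) :
    ∃ A : ℕ, ∀ n, f (n + 1) ≤ A * (n + 1) ^ k := by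
  have hshift := hf.comp_tendsto (tendsto_add_atTop_nat 1)
  rw [← Nat.cofinite_eq_atTop, Asymptotics.isBigO_cofinite_iff fun n hn =>
    absurd hn (by simp only [Function.comp_apply]; positivity)] at hshift
  obtain ⟨c, hc⟩ := hshift
  refine ⟨⌈c⌉₊, fun n => ?_⟩
  have hcn := hc n
  simp only [Function.comp_apply, Real.norm_natCast, norm_pow] at hcn
  have : (f (n + 1) : ℝ) ≤ ⌈c⌉₊ * ((n + 1 : ℕ) : ℝ) ^ k :=
    hcn.trans (by gcongr; exact Nat.le_ceil c)
  exact_mod_cast this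

theorem firefighter_superpolynomial_growth_general {Γ : Type*} [Group Γ] (S : Finset Γ)
    (hgrowth : ∀ d : ℕ, 2 ≤ d → ∃ C : ℕ, 0 < C ∧
      ∀ n : ℕ, 1 ≤ n → (n : ℝ) ^ d ≤ (C : ℝ) * growth S (C * n)) :
    ∀ (k : ℕ) (f : ℕ → ℕ),
      (fun n => (f n : ℝ)) =O[atTop] (fun n => (n : ℝ) ^ k) →
      ¬ HasContainment (cayleyGraph S) f := by
  intro k f hf
  obtain ⟨A, hA⟩ := exists_succ_le_mul_pow_of_isBigO hf
  obtain ⟨C, hC, hCgrowth⟩ := hgrowth (k + 3) (by omega)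
  obtain ⟨C', hC', hiso⟩ := exists_isoperimetric_of_growth S (d := k + 2) hC
    fun n hn => by exact_mod_cast hCgrowth n hn
  exact not_hasContainment_of_isoperimetric hC' hiso hA

/-- **Corollary 2.** Let `G` be a Cayley graph of superpolynomial growth
(`v(n) ⪰ n^d` for every integer `d ≥ 2`; in particular any group of intermediate
growth). Then `G` does not satisfy polynomial containment of any degree: for every
`k` and every `f = O(n^k)`, `G` does not satisfy `{f(n)}`-containment. -/
theorem firefighter_superpolynomial_growth {Γ : Type*} [Group Γ] (S : Finset Γ)
    (hS_symm : ∀ s ∈ S, s⁻¹ ∈ S)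
    (hS_gen : Subgroup.closure (S : Set Γ) = ⊤)
    (hgrowth : ∀ d : ℕ, 2 ≤ d → ∃ C : ℕ, 0 < C ∧
      ∀ n : ℕ, 1 ≤ n → (n : ℝ) ^ d ≤ (C : ℝ) * growth S (C * n)) :
    ∀ (k : ℕ) (f : ℕ → ℕ),
      (fun n => (f n : ℝ)) =O[atTop] (fun n => (n : ℝ) ^ k) →
      ¬ HasContainment (cayleyGraph S) f :=
  firefighter_superpolynomial_growth_general S hgrowth
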